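/- arXiv:2204.03805 — 3 statements merged into one kernel-verified Lean document; each statement's English description precedes it below -/
import Mathlib

section
/- Let A be a non-empty set and f : A → ℂ a bounded function. Then x ∈ ℝ is a Fréchet cluster point of the function a ↦ |f(a)| if and only if there exists a Fréchet cluster point z of f with |z| = x. -/
/-!
Since closed balls of `ℂ` are compact, the norm `ℂ → ℝ` is a proper map, and cluster points lift
along proper maps: a cluster point of `‖f‖` along the cofinite filter is the norm of a cluster
point of `f`. The converse is continuity of the norm.
-/

open Filter Set

noncomputable section

/-- `z` is a Fréchet cluster point of `f` : for every `ε > 0` and every set `B` in the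
Fréchet (cofinite) filter on `A` there is `a ∈ B` with `dist (f a) z < ε`. -/
def FrechetClusterPt {A X : Type*} [PseudoMetricSpace X] (f : A → X) (z : X) : Prop :=
  ∀ ε > 0, ∀ B ∈ (Filter.cofinite : Filter A), ∃ a ∈ B, dist (f a) z < ε

/-- The Fréchet limit superior `limsup_F f = inf_{B ∈ F} sup f[B]`, the infimum over the
cofinite sets `B` of `sup f[B]`. -/
def frechetLimsup {A : Type*} (f : A → ℝ) : ℝ :=
  sInf ((fun B : Set A => sSup (f '' B)) '' {B | B ∈ (Filter.cofinite : Filter A)})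

/-- The Fréchet limit inferior `liminf_F f = sup_{B ∈ F} inf f[B]`, the supremum over the
cofinite sets `B` of `inf f[B]`. -/
def frechetLiminf {A : Type*} (f : A → ℝ) : ℝ :=
  sSup ((fun B : Set A => sInf (f '' B)) '' {B | B ∈ (Filter.cofinite : Filter A)})

theorem frechetClusterPt_iff_mapClusterPt {A X : Type*} [PseudoMetricSpace X] {f : A → X}
    {z : X} : FrechetClusterPt f z ↔ MapClusterPt z cofinite f := by
  simp only [FrechetClusterPt, Metric.nhds_basis_ball.mapClusterPt_iff_frequently,
    frequently_iff, Metric.mem_ball]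

theorem isProperMap_norm {E : Type*} [SeminormedAddCommGroup E] [ProperSpace E] :
    IsProperMap (norm : E → ℝ) := by
  simpa only [funext dist_zero_left] using isProperMap_dist (0 : E)

theorem IsProperMap.mapClusterPt_comp_iff {A X Y : Type*} [TopologicalSpace X]
    [TopologicalSpace Y] {p : X → Y} (hp : IsProperMap p) {l : Filter A} {f : A → X} {y : Y} :
    MapClusterPt y l (p ∘ f) ↔ ∃ x, MapClusterPt x l f ∧ p x = y := by
  constructor
  · intro h
    obtain ⟨x, rfl, hx⟩ := hp.clusterPt_of_mapClusterPt (mapClusterPt_comp.mp h)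
    exact ⟨x, hx, rfl⟩
  · rintro ⟨x, hx, rfl⟩
    exact hx.continuousAt_comp hp.continuous.continuousAt

theorem stmt9_general {A : Type*} (f : A → ℂ) (x : ℝ) :
    FrechetClusterPt (fun a => ‖f a‖) x ↔
      ∃ z : ℂ, FrechetClusterPt f z ∧ ‖z‖ = x := by
  simp only [frechetClusterPt_iff_mapClusterPt]
  exact isProperMap_norm.mapClusterPt_comp_iff

/-- Let `A` be a non-empty set and `f : A → ℂ` a bounded function.
Then `x ∈ ℝ` is a Fréchet cluster point of `a ↦ |f a|` iff there is a Fréchet cluster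
point `z` of `f` with `|z| = x`. -/
theorem stmt9 {A : Type*} [Nonempty A] (f : A → ℂ)
    (hf : ∃ M : ℝ, ∀ a : A, ‖f a‖ ≤ M) (x : ℝ) :
    FrechetClusterPt (fun a => ‖f a‖) x ↔
      ∃ z : ℂ, FrechetClusterPt f z ∧ ‖z‖ = x :=
  stmt9_general f x
end
end

section
/- Let E be a complex Banach lattice, F ⊂ E a norm closed, order dense ideal in E, and T ∈ Z(E). Then the restriction T_F of T to F satisfies ‖T_F‖ = ‖T‖. -/
open Filter Set

noncomputable section

/-- The disjoint complement `S^d = {x : |x| ⊓ |a| = 0 for all a ∈ S}` of a set `S`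
in a Banach lattice. -/
def dComp {E : Type*} [NormedAddCommGroup E] [Lattice E] [HasSolidNorm E] [IsOrderedAddMonoid E] (S : Set E) : Set E :=
  {x | ∀ a ∈ S, |x| ⊓ |a| = 0}

/-- `a` is an atom: the band `{a}^{dd}` generated by `a` is one-dimensional. -/
def IsAtomE {E : Type*} [NormedAddCommGroup E] [Lattice E] [HasSolidNorm E] [IsOrderedAddMonoid E] [NormedSpace ℂ E] (a : E) : Prop :=
  a ≠ 0 ∧ ∀ x ∈ dComp (dComp ({a} : Set E)), ∃ c : ℂ, x = c • a

/-- The set of positive atoms of norm one. -/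
def posAtoms (E : Type*) [NormedAddCommGroup E] [Lattice E] [HasSolidNorm E] [IsOrderedAddMonoid E] [NormedSpace ℂ E] : Set E :=
  {a | IsAtomE a ∧ 0 < a ∧ ‖a‖ = 1}

/-- `T` belongs to the center `Z(E) = {T : |T| ≤ λ I for some λ ≥ 0}`;
equivalently `|Tx| ≤ λ|x|` for all `x`. -/
def IsCentral {E : Type*} [NormedAddCommGroup E] [Lattice E] [HasSolidNorm E] [IsOrderedAddMonoid E] [NormedSpace ℂ E] (T : E →L[ℂ] E) : Prop :=
  ∃ c : ℝ, 0 ≤ c ∧ ∀ x : E, |T x| ≤ c • |x|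

/-- The essential spectrum: the spectrum of `T + K(E)` in the Calkin algebra, i.e. the
set of `z` such that `T - z` is not invertible modulo the compact operators. -/
def essSpectrum {X : Type*} [NormedAddCommGroup X] [NormedSpace ℂ X] (T : X →L[ℂ] X) : Set ℂ :=
  {z | ¬ ∃ S : X →L[ℂ] X, IsCompactOperator ⇑(S * (T - z • 1) - 1) ∧
      IsCompactOperator ⇑((T - z • 1) * S - 1)}

/-- The essential spectral radius, the spectral radius of `T + K(E)` in the Calkin algebra. -/
def essSpectralRadius {X : Type*} [NormedAddCommGroup X] [NormedSpace ℂ X] (T : X →L[ℂ] X) : ℝ :=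
  sSup (norm '' essSpectrum T)

/-- The essential norm `‖T‖ₑ = inf{‖T - K‖ : K compact}`. -/
def essNorm {X : Type*} [NormedAddCommGroup X] [NormedSpace ℂ X] (T : X →L[ℂ] X) : ℝ :=
  sInf ((fun K => ‖T - K‖) '' {K : X →L[ℂ] X | IsCompactOperator ⇑K})

/-- The spectral radius of `T`. -/
def specRadius {X : Type*} [NormedAddCommGroup X] [NormedSpace ℂ X] (T : X →L[ℂ] X) : ℝ :=
  sSup (norm '' spectrum ℂ T)

/-!
Let `M` be the norm of `T` on `F` and `μ > M`. For `0 ≤ y ∈ F` the truncations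
`w a = y ⊓ κ • (|T y| - a • y)⁺` satisfy `a' • w a' ≤ |T (w a)|` whenever `κ * (a' - a) = 1`, so
along `n` equally spaced levels climbing from some `a₀ > M` to `μ` their norms decay like
`(M / a₀) ^ n`. Letting `n → ∞` makes `(|T y| - μ • y)⁺` disjoint from `y`; being dominated by a
multiple of `y`, it vanishes, i.e. `|T y| ≤ μ • y`. Order density carries this to all of `E`: a
nonzero excess `(|T z| - μ • z)⁺` would dominate some `0 < y ∈ F`, and comparing `z` with
`z ⊓ n • y ∈ F` yields `n • y ≤ z` for every `n`. Finally `|T z| ≤ μ • |z|` bounds `‖T‖` by `μ`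
since the norm is solid.
-/

open LatticeOrderedAddCommGroup (IsSolid)

section LatticeOrderedGroup

variable {α : Type*} [Lattice α] [AddCommGroup α] [IsOrderedAddMonoid α] {p q : α}

lemma sub_inf_eq_posPart_sub (a b : α) : a - a ⊓ b = (a - b)⁺ := by
  rw [inf_eq_sub_posPart_sub, sub_sub_cancel]

lemma posPart_sub_of_inf_eq_zero (h : p ⊓ q = 0) : (p - q)⁺ = p := by
  rw [← sub_inf_eq_posPart_sub, h, sub_zero]

lemma negPart_sub_of_inf_eq_zero (h : p ⊓ q = 0) : (p - q)⁻ = q := by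
  rw [← neg_sub, negPart_neg, posPart_sub_of_inf_eq_zero (by rwa [inf_comm])]

lemma inf_nsmul_eq_zero_of_inf_eq_zero (hp : 0 ≤ p) (hq : 0 ≤ q) (h : p ⊓ q = 0) :
    ∀ n : ℕ, p ⊓ n • q = 0
  | 0 => by rw [zero_nsmul, inf_eq_right.2 hp]
  | n + 1 => by
    refine le_antisymm (le_of_le_of_eq ?_ (inf_nsmul_eq_zero_of_inf_eq_zero hp hq h n))
      (le_inf hp (nsmul_nonneg hq _))
    have hr : p ⊓ (q + n • q) ≤ n • q := by
      calc p ⊓ (q + n • q) ≤ (p + n • q) ⊓ (q + n • q) :=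
            inf_le_inf_right _ (le_add_of_nonneg_right (nsmul_nonneg hq n))
        _ = n • q := by rw [← inf_add, h, zero_add]
    rw [succ_nsmul']
    exact le_inf inf_le_left hr

lemma nsmul_inf_nsmul_eq_zero_of_inf_eq_zero (hp : 0 ≤ p) (hq : 0 ≤ q) (h : p ⊓ q = 0)
    (m n : ℕ) : m • p ⊓ n • q = 0 := by
  refine inf_nsmul_eq_zero_of_inf_eq_zero (nsmul_nonneg hp m) hq ?_ n
  rw [inf_comm]
  exact inf_nsmul_eq_zero_of_inf_eq_zero hq hp (by rwa [inf_comm]) m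

lemma nonneg_of_nsmul_nonneg {a : α} {n : ℕ} (hn : n ≠ 0) (h : 0 ≤ n • a) : 0 ≤ a := by
  have hdisj := nsmul_inf_nsmul_eq_zero_of_inf_eq_zero (posPart_nonneg a) (negPart_nonneg a)
    (posPart_inf_negPart_eq_zero a) n n
  have hneg : n • a⁻ = 0 := by
    rw [← negPart_sub_of_inf_eq_zero hdisj, ← nsmul_sub, posPart_sub_negPart,
      negPart_eq_zero.2 h]
  rw [← negPart_eq_zero]
  exact le_antisymm ((le_self_nsmul (negPart_nonneg a) hn).trans hneg.le) (negPart_nonneg a)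

end LatticeOrderedGroup

section RealNormedLattice

variable {E : Type*} [NormedAddCommGroup E] [Lattice E] [HasSolidNorm E] [IsOrderedAddMonoid E]

lemma norm_le_norm_of_nonneg_of_le {x y : E} (hx : 0 ≤ x) (h : x ≤ y) : ‖x‖ ≤ ‖y‖ :=
  norm_le_norm_of_abs_le_abs (by rwa [abs_of_nonneg hx, abs_of_nonneg (hx.trans h)])

variable [NormedSpace ℝ E]

-- Rational multiples of positive elements are positive because a lattice-ordered group is
-- unperforated (`nonneg_of_nsmul_nonneg`); real ones follow since the positive cone is closed.
instance HasSolidNorm.toPosSMulMono : PosSMulMono ℝ E := by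
  refine PosSMulMono.of_smul_nonneg fun r hr x hx => ?_
  have hrat (q : ℚ) : 0 ≤ max (q : ℝ) 0 • x := by
    rcases le_total q 0 with hq | hq
    · rw [max_eq_right (by exact_mod_cast hq), zero_smul]
    refine nonneg_of_nsmul_nonneg q.den_ne_zero ?_
    have hnum : (q.den : ℝ) * max (q : ℝ) 0 = q.num.toNat := by
      have hcast : ((q.num.toNat : ℕ) : ℝ) = q.num := by
        exact_mod_cast Int.toNat_of_nonneg (Rat.num_nonneg.2 hq)
      rw [max_eq_left (by exact_mod_cast hq), hcast]
      exact_mod_cast Rat.den_mul_eq_num q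
    rw [← Nat.cast_smul_eq_nsmul ℝ, smul_smul, hnum, Nat.cast_smul_eq_nsmul]
    exact nsmul_nonneg hx _
  have hclosed : IsClosed {t : ℝ | 0 ≤ max t 0 • x} :=
    isClosed_nonneg.preimage ((continuous_id.max continuous_const).smul continuous_const)
  simpa [max_eq_left hr] using
    Rat.denseRange_cast.induction_on (p := fun t => 0 ≤ max t 0 • x) r hclosed hrat

lemma smul_inf_of_nonneg {r : ℝ} (hr : 0 ≤ r) (x y : E) : r • (x ⊓ y) = r • x ⊓ r • y := by
  rcases hr.eq_or_lt with rfl | hr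
  · simp
  · exact (OrderIso.smulRight hr).map_inf x y

lemma smul_inf_smul_eq_zero_of_inf_eq_zero {p q : E} {a b : ℝ} (ha : 0 ≤ a) (hb : 0 ≤ b)
    (hp : 0 ≤ p) (hq : 0 ≤ q) (h : p ⊓ q = 0) : a • p ⊓ b • q = 0 := by
  refine le_antisymm ?_ (le_inf (smul_nonneg ha hp) (smul_nonneg hb hq))
  calc a • p ⊓ b • q ≤ max a b • p ⊓ max a b • q :=
        inf_le_inf (smul_le_smul_of_nonneg_right (le_max_left a b) hp)
          (smul_le_smul_of_nonneg_right (le_max_right a b) hq)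
    _ = 0 := by rw [← smul_inf_of_nonneg (ha.trans (le_max_left a b)), h, smul_zero]

lemma eq_zero_of_forall_nsmul_le {y z : E} (hy : 0 ≤ y) (h : ∀ n : ℕ, n • y ≤ z) : y = 0 := by
  have hle (n : ℕ) : n * ‖y‖ ≤ ‖z‖ := by
    simpa [← Nat.cast_smul_eq_nsmul ℝ, norm_smul] using
      norm_le_norm_of_nonneg_of_le (nsmul_nonneg hy n) (h n)
  rw [← norm_le_zero_iff]
  by_contra! hpos
  obtain ⟨n, hn⟩ := exists_nat_gt (‖z‖ / ‖y‖)
  exact (hle n).not_gt ((div_lt_iff₀ hpos).1 hn)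

end RealNormedLattice

section Ladder

variable {E : Type*} [NormedAddCommGroup E] [Lattice E] [NormedSpace ℝ E]
  {𝓕 : Type*} [FunLike 𝓕 E E] {T : 𝓕} {c M κ a b : ℝ} {y : E}

/-- Thinking of `T` as multiplication by a function `t`, this is `y` cut down, with slope `κ`, to
where `|t| > a`. -/
def cutoff (T : 𝓕) (y : E) (κ a : ℝ) : E := y ⊓ κ • (|T y| - a • y)⁺

lemma cutoff_le : cutoff T y κ a ≤ y := inf_le_left

variable [HasSolidNorm E] [IsOrderedAddMonoid E]

lemma cutoff_nonneg (hy : 0 ≤ y) (hκ : 0 ≤ κ) : 0 ≤ cutoff T y κ a :=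
  le_inf hy (smul_nonneg hκ (posPart_nonneg _))

variable [AddMonoidHomClass 𝓕 E E]

lemma smul_cutoff_le_abs_apply_cutoff (hc : 0 ≤ c) (hT : ∀ x, |T x| ≤ c • |x|) (hy : 0 ≤ y)
    (hκ : 0 ≤ κ) (hb : 0 ≤ b) (hab : κ * (b - a) = 1) :
    b • cutoff T y κ b ≤ |T (cutoff T y κ a)| := by
  set s := |T y| - b • y
  set w := cutoff T y κ a
  have hshift : κ • (|T y| - a • y) = κ • s + y := by
    have : κ • (|T y| - a • y) - κ • s = (κ * (b - a)) • y := by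
      simp only [s, smul_sub, smul_smul, mul_sub, sub_smul]
      abel
    rw [← sub_eq_iff_eq_add', this, hab, one_smul]
  have hrest : y - w ≤ κ • s⁻ := by
    rw [show y - w = (y - κ • (|T y| - a • y)⁺)⁺ from sub_inf_eq_posPart_sub _ _]
    refine sup_le ?_ (smul_nonneg hκ (negPart_nonneg _))
    calc y - κ • (|T y| - a • y)⁺ ≤ y - κ • (|T y| - a • y) :=
          sub_le_sub_left (smul_le_smul_of_nonneg_left (le_posPart _) hκ) _
      _ = κ • -s := by rw [hshift, smul_neg]; abel
      _ ≤ κ • s⁻ := smul_le_smul_of_nonneg_left (neg_le_negPart s) hκ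
  have hTrest : |T (y - w)| ≤ (c * κ) • s⁻ := by
    calc |T (y - w)| ≤ c • |y - w| := hT _
      _ = c • (y - w) := by rw [abs_of_nonneg (sub_nonneg.2 cutoff_le)]
      _ ≤ (c * κ) • s⁻ := by
          rw [mul_smul]; exact smul_le_smul_of_nonneg_left hrest hc
  have hsplit : |T y| ≤ |T w| + (c * κ) • s⁻ := by
    calc |T y| = |T w + T (y - w)| := by rw [← map_add, add_sub_cancel]
      _ ≤ |T w| + |T (y - w)| := abs_add_le _ _
      _ ≤ |T w| + (c * κ) • s⁻ := add_le_add_right hTrest _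
  have hlower : b • cutoff T y κ b - (1 + c * κ) • s⁻ ≤ |T w| := by
    calc b • cutoff T y κ b - (1 + c * κ) • s⁻ ≤ b • y + s⁺ - (1 + c * κ) • s⁻ :=
          sub_le_sub_right ((smul_le_smul_of_nonneg_left cutoff_le hb).trans
            (le_add_of_nonneg_right (posPart_nonneg s))) _
      _ = b • y + (s⁺ - s⁻) - (c * κ) • s⁻ := by rw [add_smul, one_smul]; abel
      _ = |T y| - (c * κ) • s⁻ := by rw [posPart_sub_negPart, add_sub_cancel]
      _ ≤ |T w| := sub_le_iff_le_add.2 hsplit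
  -- `b • cutoff T y κ b` lives on `s⁺`, which is disjoint from `s⁻`
  have hdisj : b • cutoff T y κ b ⊓ (1 + c * κ) • s⁻ = 0 := by
    have hsupp : b • cutoff T y κ b ≤ (b * κ) • s⁺ := by
      rw [mul_smul]; exact smul_le_smul_of_nonneg_left inf_le_right hb
    refine le_antisymm ((inf_le_inf_right _ hsupp).trans (smul_inf_smul_eq_zero_of_inf_eq_zero
      (by positivity) (by positivity) (posPart_nonneg s) (negPart_nonneg s)
      (posPart_inf_negPart_eq_zero s)).le) (le_inf (smul_nonneg hb (cutoff_nonneg hy hκ))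
      (smul_nonneg (by positivity) (negPart_nonneg s)))
  rw [← posPart_sub_of_inf_eq_zero hdisj]
  exact sup_le hlower (abs_nonneg _)

lemma mul_norm_cutoff_le (hc : 0 ≤ c) (hT : ∀ x, |T x| ≤ c • |x|) (hy : 0 ≤ y) (hκ : 0 ≤ κ)
    (hb : 0 ≤ b) (hab : κ * (b - a) = 1) (hM : ∀ v, 0 ≤ v → v ≤ y → ‖T v‖ ≤ M * ‖v‖) :
    b * ‖cutoff T y κ b‖ ≤ M * ‖cutoff T y κ a‖ :=
  calc b * ‖cutoff T y κ b‖ = ‖b • cutoff T y κ b‖ := by rw [norm_smul, Real.norm_of_nonneg hb]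
    _ ≤ ‖|T (cutoff T y κ a)|‖ :=
        norm_le_norm_of_nonneg_of_le (smul_nonneg hb (cutoff_nonneg hy hκ))
          (smul_cutoff_le_abs_apply_cutoff hc hT hy hκ hb hab)
    _ = ‖T (cutoff T y κ a)‖ := norm_abs_eq_norm _
    _ ≤ M * ‖cutoff T y κ a‖ := hM _ (cutoff_nonneg hy hκ) cutoff_le

lemma pow_mul_norm_cutoff_le (hc : 0 ≤ c) (hT : ∀ x, |T x| ≤ c • |x|) (hy : 0 ≤ y) (ha : 0 ≤ a)
    (hκ : 0 < κ) (hM0 : 0 ≤ M) (hM : ∀ v, 0 ≤ v → v ≤ y → ‖T v‖ ≤ M * ‖v‖) :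
    ∀ n : ℕ, a ^ n * ‖cutoff T y κ (a + n / κ)‖ ≤ M ^ n * ‖y‖
  | 0 => by simpa using norm_le_norm_of_nonneg_of_le (cutoff_nonneg hy hκ.le) cutoff_le
  | n + 1 => by
    have hstep := mul_norm_cutoff_le (a := a + n / κ) (b := a + (n + 1 : ℕ) / κ) hc hT hy hκ.le
      (by positivity) (by field_simp; push_cast; ring) hM
    calc a ^ (n + 1) * ‖cutoff T y κ (a + (n + 1 : ℕ) / κ)‖
        ≤ a ^ n * ((a + (n + 1 : ℕ) / κ) * ‖cutoff T y κ (a + (n + 1 : ℕ) / κ)‖) := by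
          rw [pow_succ, mul_assoc]
          gcongr
          exact le_add_of_nonneg_right (by positivity)
      _ ≤ a ^ n * (M * ‖cutoff T y κ (a + n / κ)‖) := by gcongr
      _ = M * (a ^ n * ‖cutoff T y κ (a + n / κ)‖) := by ring
      _ ≤ M * (M ^ n * ‖y‖) :=
          mul_le_mul_of_nonneg_left (pow_mul_norm_cutoff_le hc hT hy ha hκ hM0 hM n) hM0
      _ = M ^ (n + 1) * ‖y‖ := by ring

theorem abs_apply_le_smul_of_norm_le (hc : 0 ≤ c) (hT : ∀ x, |T x| ≤ c • |x|) (hy : 0 ≤ y)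
    (hM0 : 0 ≤ M) (hM : ∀ v, 0 ≤ v → v ≤ y → ‖T v‖ ≤ M * ‖v‖) {μ : ℝ} (hμ : M < μ) :
    |T y| ≤ μ • y := by
  obtain ⟨a, hMa, haμ⟩ := exists_between hμ
  have ha : 0 < a := hM0.trans_lt hMa
  have hδ : 0 < μ - a := sub_pos.2 haμ
  set u := (|T y| - μ • y)⁺
  have hdecay (n : ℕ) (hn : 1 ≤ n) : ‖y ⊓ (μ - a)⁻¹ • u‖ ≤ (M / a) ^ n * ‖y‖ := by
    have hκ : 0 < n / (μ - a) := by positivity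
    have h := pow_mul_norm_cutoff_le hc hT hy ha.le hκ hM0 hM n
    rw [show a + n / (n / (μ - a)) = μ by field_simp; ring] at h
    rw [div_pow, div_mul_eq_mul_div, le_div_iff₀ (by positivity), mul_comm]
    refine le_trans (mul_le_mul_of_nonneg_left (norm_le_norm_of_nonneg_of_le
      (le_inf hy (smul_nonneg (by positivity) (posPart_nonneg _))) ?_) (by positivity)) h
    refine inf_le_inf_left _ (smul_le_smul_of_nonneg_right ?_ (posPart_nonneg _))
    rw [inv_eq_one_div]
    gcongr
    exact_mod_cast hn
  have hdisj : y ⊓ (μ - a)⁻¹ • u = 0 := by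
    rw [← norm_le_zero_iff]
    have hlim : Tendsto (fun n : ℕ => (M / a) ^ n * ‖y‖) atTop (nhds 0) := by
      simpa using (tendsto_pow_atTop_nhds_zero_of_lt_one (by positivity)
        ((div_lt_one ha).2 hMa)).mul_const ‖y‖
    exact ge_of_tendsto hlim (eventually_atTop.2 ⟨1, hdecay⟩)
  have hu : u ≤ c • y := by
    calc u ≤ |T y| := sup_le (sub_le_self _ (smul_nonneg (hM0.trans hμ.le) hy)) (abs_nonneg _)
      _ ≤ c • y := by simpa [abs_of_nonneg hy] using hT y
  have hscaled : (μ - a)⁻¹ • u = 0 := by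
    calc (μ - a)⁻¹ • u = (μ - a)⁻¹ • u ⊓ ((μ - a)⁻¹ * c) • y := by
          rw [eq_comm, inf_eq_left, mul_smul]
          exact smul_le_smul_of_nonneg_left hu (by positivity)
      _ = 0 := by
          simpa using smul_inf_smul_eq_zero_of_inf_eq_zero (a := 1) zero_le_one (by positivity)
            (smul_nonneg (by positivity) (posPart_nonneg _)) hy (by rwa [inf_comm])
  have hu0 : u = 0 := by simpa [hδ.ne'] using hscaled
  exact sub_nonpos.1 ((le_posPart _).trans hu0.le)

end Ladder

section OrderDense

variable {E : Type*} [NormedAddCommGroup E] [Lattice E] [HasSolidNorm E] [IsOrderedAddMonoid E]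
  [NormedSpace ℝ E] {𝓕 : Type*} [FunLike 𝓕 E E] [AddMonoidHomClass 𝓕 E E] {T : 𝓕} {c μ : ℝ}
  {F : AddSubgroup E}

theorem abs_apply_le_smul_of_orderDense (hF : IsSolid (F : Set E))
    (hdense : ∀ x : E, 0 < x → ∃ y ∈ F, 0 < y ∧ y ≤ x) (hc : 0 ≤ c)
    (hT : ∀ x, |T x| ≤ c • |x|) (hμ : 0 ≤ μ) (hTF : ∀ p ∈ F, 0 ≤ p → |T p| ≤ μ • p) {z : E}
    (hz : 0 ≤ z) : |T z| ≤ μ • z := by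
  set u := (|T z| - μ • z)⁺
  suffices hu : u = 0 from sub_nonpos.1 ((le_posPart _).trans hu.le)
  by_contra hu
  obtain ⟨y, hyF, hy, hyu⟩ := hdense u ((posPart_nonneg _).lt_of_ne (Ne.symm hu))
  refine hy.ne' (eq_zero_of_forall_nsmul_le (z := z) hy.le fun n => ?_)
  have hny : 0 ≤ n • y := nsmul_nonneg hy.le n
  have hpF : z ⊓ n • y ∈ F := hF (F.nsmul_mem hyF n) <| by
    rw [abs_of_nonneg (le_inf hz hny), abs_of_nonneg hny]
    exact inf_le_right
  have hyP : y ≤ c • (z - n • y)⁺ := by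
    refine hyu.trans (sup_le ?_ (smul_nonneg hc (posPart_nonneg _)))
    rw [← sub_inf_eq_posPart_sub, sub_le_iff_le_add']
    calc |T z| = |T (z ⊓ n • y) + T (z - z ⊓ n • y)| := by rw [← map_add, add_sub_cancel]
      _ ≤ |T (z ⊓ n • y)| + |T (z - z ⊓ n • y)| := abs_add_le _ _
      _ ≤ μ • z + c • (z - z ⊓ n • y) := by
          refine add_le_add ((hTF _ hpF (le_inf hz hny)).trans
            (smul_le_smul_of_nonneg_left inf_le_left hμ)) ?_
          exact (hT _).trans_eq (by rw [abs_of_nonneg (sub_nonneg.2 inf_le_left)])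
  have hdisj : n • y ⊓ (z - n • y)⁻ = 0 := by
    have hle : n • y ≤ ((n : ℝ) * c) • (z - n • y)⁺ := by
      rw [mul_smul, Nat.cast_smul_eq_nsmul]
      exact nsmul_le_nsmul_right hyP n
    refine le_antisymm ((inf_le_inf_right _ hle).trans ?_) (le_inf hny (negPart_nonneg _))
    simpa using (smul_inf_smul_eq_zero_of_inf_eq_zero (b := 1) (by positivity) zero_le_one
      (posPart_nonneg _) (negPart_nonneg _) (posPart_inf_negPart_eq_zero (z - n • y))).le
  have hsplit : n • y - (z - n • y)⁻ = z ⊓ n • y := by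
    rw [inf_eq_sub_posPart_sub, ← sub_eq_zero, ← sub_eq_zero.2 (posPart_sub_negPart (z - n • y))]
    abel
  calc n • y = (n • y - (z - n • y)⁻)⁺ := (posPart_sub_of_inf_eq_zero hdisj).symm
    _ ≤ z := by rw [hsplit]; exact sup_le inf_le_left hz

theorem abs_apply_le_smul_abs_of_orderDense (hF : IsSolid (F : Set E))
    (hdense : ∀ x : E, 0 < x → ∃ y ∈ F, 0 < y ∧ y ≤ x) (hc : 0 ≤ c)
    (hT : ∀ x, |T x| ≤ c • |x|) (hμ : 0 ≤ μ) (hTF : ∀ p ∈ F, 0 ≤ p → |T p| ≤ μ • p) (z : E) :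
    |T z| ≤ μ • |z| :=
  calc |T z| = |T z⁺ - T z⁻| := by rw [← map_sub, posPart_sub_negPart]
    _ ≤ |T z⁺| + |T z⁻| := by
        simpa only [sub_eq_add_neg, abs_neg] using abs_add_le (T z⁺) (-T z⁻)
    _ ≤ μ • z⁺ + μ • z⁻ :=
        add_le_add (abs_apply_le_smul_of_orderDense hF hdense hc hT hμ hTF (posPart_nonneg z))
          (abs_apply_le_smul_of_orderDense hF hdense hc hT hμ hTF (negPart_nonneg z))
    _ = μ • |z| := by rw [← smul_add, posPart_add_negPart]

end OrderDense

namespace ContinuousLinearMap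

variable {𝕜 E : Type*} [NontriviallyNormedField 𝕜] [NormedAddCommGroup E] [Lattice E]
  [HasSolidNorm E] [IsOrderedAddMonoid E] [NormedSpace ℝ E] [NormedSpace 𝕜 E] {T : E →L[𝕜] E}
  {c M μ : ℝ}

theorem opNorm_le_of_abs_apply_le (hμ : 0 ≤ μ) (h : ∀ x, |T x| ≤ μ • |x|) : ‖T‖ ≤ μ :=
  T.opNorm_le_bound hμ fun x =>
    calc ‖T x‖ = ‖|T x|‖ := (norm_abs_eq_norm _).symm
      _ ≤ ‖μ • |x|‖ := norm_le_norm_of_nonneg_of_le (abs_nonneg _) (h x)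
      _ = μ * ‖x‖ := by rw [norm_smul, Real.norm_of_nonneg hμ, norm_abs_eq_norm]

theorem opNorm_le_of_orderDense {F : AddSubgroup E} (hF : IsSolid (F : Set E))
    (hdense : ∀ x : E, 0 < x → ∃ y ∈ F, 0 < y ∧ y ≤ x) (hc : 0 ≤ c)
    (hT : ∀ x, |T x| ≤ c • |x|) (hM0 : 0 ≤ M) (hM : ∀ v ∈ F, ‖T v‖ ≤ M * ‖v‖) : ‖T‖ ≤ M := by
  refine le_of_forall_gt_imp_ge_of_dense fun μ hμ => opNorm_le_of_abs_apply_le (hM0.trans hμ.le)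
    (abs_apply_le_smul_abs_of_orderDense hF hdense hc hT (hM0.trans hμ.le) fun p hp hp0 => ?_)
  refine abs_apply_le_smul_of_norm_le hc hT hp0 hM0 (fun v hv0 hvp => hM v (hF hp ?_)) hμ
  rwa [abs_of_nonneg hv0, abs_of_nonneg hp0]

end ContinuousLinearMap

theorem stmt15_general {E : Type*} [NormedAddCommGroup E] [Lattice E] [HasSolidNorm E] [IsOrderedAddMonoid E] [NormedSpace ℂ E]
    (F : Submodule ℂ E)
    (hideal : ∀ x y : E, y ∈ F → |x| ≤ |y| → x ∈ F)
    (hdense : ∀ x : E, 0 < x → ∃ y ∈ F, 0 < y ∧ y ≤ x)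
    (T : E →L[ℂ] E) (hT : IsCentral T) :
    sSup ((fun x => ‖T x‖) '' {x : E | x ∈ F ∧ ‖x‖ ≤ 1}) = ‖T‖ := by
  obtain ⟨c, hc, hTc⟩ := hT
  have hball : (fun x => ‖T x‖) '' {x : E | x ∈ F ∧ ‖x‖ ≤ 1} =
      (fun x => ‖(T ∘L F.subtypeL) x‖) '' Metric.closedBall 0 1 := by
    ext r
    constructor
    · rintro ⟨x, ⟨hxF, hx⟩, rfl⟩
      exact ⟨⟨x, hxF⟩, by simpa using hx, rfl⟩
    · rintro ⟨⟨x, hxF⟩, hx, rfl⟩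
      exact ⟨x, ⟨hxF, by simpa using hx⟩, rfl⟩
  rw [hball, ContinuousLinearMap.sSup_unitClosedBall_eq_norm]
  refine le_antisymm ?_ (ContinuousLinearMap.opNorm_le_of_orderDense (F := F.toAddSubgroup)
    (fun x hx y hy => hideal y x hx hy) hdense hc hTc (norm_nonneg _)
    fun v hv => (T ∘L F.subtypeL).le_opNorm ⟨v, hv⟩)
  calc ‖T ∘L F.subtypeL‖ ≤ ‖T‖ * ‖F.subtypeL‖ := T.opNorm_comp_le _
    _ ≤ ‖T‖ := mul_le_of_le_one_right (norm_nonneg _) (Submodule.norm_subtypeL_le F)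

/-- Let `E` be a complex Banach lattice, `F ⊆ E` a norm closed, order
dense ideal in `E`, and `T ∈ Z(E)`.  Then the restriction `T_F` of `T` to `F` (which maps
`F` into itself since `T` is central) satisfies
`‖T_F‖ = sup{‖Tx‖ : x ∈ F, ‖x‖ ≤ 1} = ‖T‖`. -/
theorem stmt15 {E : Type*} [NormedAddCommGroup E] [Lattice E] [HasSolidNorm E] [IsOrderedAddMonoid E] [NormedSpace ℂ E] [CompleteSpace E]
    (F : Submodule ℂ E) (hclosed : IsClosed (F : Set E))
    (hideal : ∀ x y : E, y ∈ F → |x| ≤ |y| → x ∈ F)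
    (hdense : ∀ x : E, 0 < x → ∃ y ∈ F, 0 < y ∧ y ≤ x)
    (T : E →L[ℂ] E) (hT : IsCentral T) :
    sSup ((fun x => ‖T x‖) '' {x : E | x ∈ F ∧ ‖x‖ ≤ 1}) = ‖T‖ :=
  stmt15_general F hideal hdense T hT
end
end

section
/- Let K = ⋃_{n≥1} I_n ∪ {x_n : n ≥ 1} ∪ {0} ⊂ ℝ, where x_n = 1/2^{n+1} and I_n = [1/(2^{n+1}+2), 1/(2^{n+1}+1)] for n ≥ 1. Then K is compact, x_n ∉ I_m for all n, m ≥ 1, and in the Banach lattice E = C(K) the atomic part E_A = {f ∈ E : f = 0 on ⋃_{n≥1} I_n} is not a projection band: E_A ⊕ E_{A^d} ≠ E, since every function in E_A ⊕ E_{A^d} vanishes at 0, so the constant function 1 lies in E but not in E_A ⊕ E_{A^d}. -/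
open Filter Set

noncomputable section

namespace Stmt19

/-- The atoms of the example: `xₙ = 1/2^(n+1)`. -/
def xpt (n : ℕ) : ℝ := 1 / 2 ^ (n + 1)

/-- The intervals of the example: `Iₙ = [1/(2^(n+1)+2), 1/(2^(n+1)+1)]`. -/
def Iint (n : ℕ) : Set ℝ := Set.Icc (1 / (2 ^ (n + 1) + 2)) (1 / (2 ^ (n + 1) + 1))

/-- `K = ⋃_{n≥1} Iₙ ∪ {xₙ : n ≥ 1} ∪ {0}`. -/
def K : Set ℝ := (⋃ n ∈ {n : ℕ | 1 ≤ n}, Iint n) ∪ {t | ∃ n : ℕ, 1 ≤ n ∧ t = xpt n} ∪ {0}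

end Stmt19


namespace Stmt19

lemma compact_aux (S : ℕ → Set ℝ) (hc : ∀ n, IsCompact (S n))
    (hb : ∀ n, S n ⊆ Icc 0 ((1:ℝ)/2^n)) : IsCompact ({(0:ℝ)} ∪ ⋃ n, S n) := by
  refine isCompact_of_finite_subcover ?_
  intro ι U hU hcov
  haveI := Classical.decEq ι
  have h0 : (0:ℝ) ∈ ⋃ i, U i := hcov (Or.inl rfl)
  obtain ⟨i₀, hi₀⟩ := mem_iUnion.mp h0
  obtain ⟨δ, hδ, hball⟩ := Metric.isOpen_iff.mp (hU i₀) 0 hi₀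
  obtain ⟨N, hN⟩ : ∃ N : ℕ, (1:ℝ)/2^N < δ := by
    obtain ⟨N, hN⟩ := exists_pow_lt_of_lt_one hδ (by norm_num : (1:ℝ)/2 < 1)
    exact ⟨N, by simpa [one_div, ← inv_pow] using hN⟩
  have hfin : IsCompact (⋃ n ∈ Finset.range N, S n) :=
    (Finset.range N).isCompact_biUnion fun n _ => hc n
  obtain ⟨t, ht⟩ := hfin.elim_finite_subcover U hU
    (fun x hx => hcov (Or.inr (by
      obtain ⟨n, _, hn⟩ := mem_iUnion₂.mp hx
      exact mem_iUnion.mpr ⟨n, hn⟩)))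
  refine ⟨insert i₀ t, fun x hx => ?_⟩
  rcases hx with h | h
  · exact mem_iUnion₂.mpr ⟨i₀, Finset.mem_insert_self _ _, h ▸ hi₀⟩
  · obtain ⟨n, hn⟩ := mem_iUnion.mp h
    by_cases hnN : n < N
    · obtain ⟨i, hi, hxi⟩ := mem_iUnion₂.mp (ht (mem_iUnion₂.mpr ⟨n, Finset.mem_range.mpr hnN, hn⟩))
      exact mem_iUnion₂.mpr ⟨i, Finset.mem_insert_of_mem hi, hxi⟩
    · have hx' := hb n hn
      have : x ∈ Metric.ball (0:ℝ) δ := by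
        rw [Metric.mem_ball, Real.dist_eq, sub_zero, abs_of_nonneg hx'.1]
        refine lt_of_le_of_lt (hx'.2.trans ?_) hN
        gcongr <;> norm_num; omega
      exact mem_iUnion₂.mpr ⟨i₀, Finset.mem_insert_self _ _, hball this⟩

lemma K_eq : K = {(0:ℝ)} ∪ ⋃ n, (Iint (n+1) ∪ {xpt (n+1)}) := by
  ext t
  simp only [K, mem_union, mem_iUnion, mem_setOf_eq, mem_singleton_iff]
  constructor
  · rintro ((⟨n, hn, ht⟩ | ⟨n, hn, ht⟩) | ht)
    · exact Or.inr ⟨n - 1, Or.inl (by rwa [Nat.sub_add_cancel hn])⟩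
    · exact Or.inr ⟨n - 1, Or.inr (by rwa [Nat.sub_add_cancel hn])⟩
    · exact Or.inl ht
  · rintro (ht | ⟨n, ht | ht⟩)
    · exact Or.inr ht
    · exact Or.inl (Or.inl ⟨n + 1, Nat.le_add_left 1 n, ht⟩)
    · exact Or.inl (Or.inr ⟨n + 1, Nat.le_add_left 1 n, ht⟩)

lemma block_sub (n : ℕ) : Iint (n+1) ∪ {xpt (n+1)} ⊆ Icc 0 ((1:ℝ)/2^n) := by
  rintro x (hx | hx)
  · obtain ⟨h1, h2⟩ := hx
    constructor
    · refine le_trans ?_ h1; positivity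
    · refine h2.trans ?_
      have hp : (0:ℝ) < 2^n := by positivity
      have e : (2:ℝ)^(n+1+1) = 4 * 2^n := by ring
      rw [div_le_div_iff₀ (by positivity) hp]
      nlinarith
  · rw [mem_singleton_iff] at hx
    subst hx
    unfold xpt
    constructor
    · positivity
    · have hp : (0:ℝ) < 2^n := by positivity
      have e : (2:ℝ)^(n+1+1) = 4 * 2^n := by ring
      rw [div_le_div_iff₀ (by positivity) hp]
      nlinarith

lemma K_compact : IsCompact K := by
  rw [K_eq]
  exact compact_aux _ (fun n => isCompact_Icc.union isCompact_singleton) block_sub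

lemma part2 : ∀ n m : ℕ, 1 ≤ n → 1 ≤ m → xpt n ∉ Iint m := by
  intro n m hn hm h
  obtain ⟨h1, h2⟩ := h
  unfold xpt at h1 h2
  have p1 : (0:ℝ) < 2^(n+1) := by positivity
  have p2 : (0:ℝ) < 2^(m+1) + 2 := by positivity
  have p3 : (0:ℝ) < 2^(m+1) + 1 := by positivity
  have q1 : (2:ℝ)^(n+1) ≤ 2^(m+1) + 2 := by
    rw [div_le_div_iff₀ p2 p1] at h1; linarith
  have q2 : (2:ℝ)^(m+1) + 1 ≤ 2^(n+1) := by
    rw [div_le_div_iff₀ p1 p3] at h2; linarith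
  have q1' : (2:ℕ)^(n+1) ≤ 2^(m+1) + 2 := by exact_mod_cast q1
  have q2' : (2:ℕ)^(m+1) + 1 ≤ 2^(n+1) := by exact_mod_cast q2
  have d1 : (2:ℕ) ∣ 2^n := dvd_pow_self 2 (by omega)
  have d2 : (2:ℕ) ∣ 2^m := dvd_pow_self 2 (by omega)
  have e2 : (2:ℕ)^(n+1) = 2 * 2^n := by ring
  have e3 : (2:ℕ)^(m+1) = 2 * 2^m := by ring
  omega

lemma mem_K_xpt (n : ℕ) (hn : 1 ≤ n) : xpt n ∈ K := Or.inl (Or.inr ⟨n, hn, rfl⟩)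

lemma mem_K_zero : (0:ℝ) ∈ K := Or.inr rfl

lemma mem_K_left (n : ℕ) (hn : 1 ≤ n) : (1 / (2 ^ (n + 1) + 2) : ℝ) ∈ K := by
  refine Or.inl (Or.inl (mem_biUnion hn ?_))
  exact ⟨le_refl _, one_div_le_one_div_of_le (by positivity) (by linarith)⟩

lemma tendsto_xpt : Tendsto (fun k : ℕ => xpt (k+1)) atTop (nhds 0) := by
  have h : ∀ k : ℕ, xpt (k+1) = ((1:ℝ)/2)^(k+2) := by
    intro k; unfold xpt; rw [div_pow, one_pow]
  simp_rw [h]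
  exact (tendsto_pow_atTop_nhds_zero_of_lt_one (by norm_num) (by norm_num)).comp
    (tendsto_add_atTop_nat 2)

lemma tendsto_left : Tendsto (fun k : ℕ => (1 / (2 ^ (k + 2) + 2) : ℝ)) atTop (nhds 0) := by
  refine squeeze_zero (fun k => by positivity) (fun k => ?_) tendsto_xpt
  unfold xpt
  exact one_div_le_one_div_of_le (by positivity) (by linarith)

lemma part3 :
    ¬ ∃ g h : C(↥K, ℂ),
        (∀ t : ↥K, (t : ℝ) ∈ ⋃ n ∈ {n : ℕ | 1 ≤ n}, Iint n → g t = 0) ∧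
        (∀ t : ↥K, (∃ n : ℕ, 1 ≤ n ∧ (t : ℝ) = xpt n) → h t = 0) ∧
        (1 : C(↥K, ℂ)) = g + h := by
  rintro ⟨g, h, hg, hh, hsum⟩
  set z0 : ↥K := ⟨0, mem_K_zero⟩ with hz0
  have hval : ∀ t : ↥K, g t + h t = 1 := by
    intro t
    have := ContinuousMap.congr_fun hsum t
    simp at this
    linear_combination -this
  set p : ℕ → ↥K := fun k => ⟨xpt (k+1), mem_K_xpt (k+1) (Nat.le_add_left 1 k)⟩ with hp
  have hptend : Tendsto p atTop (nhds z0) := by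
    rw [tendsto_subtype_rng]
    exact tendsto_xpt
  have hgp : ∀ k, g (p k) = 1 := by
    intro k
    have h0 : h (p k) = 0 := hh (p k) ⟨k+1, Nat.le_add_left 1 k, rfl⟩
    have := hval (p k)
    rw [h0, add_zero] at this
    exact this
  have hg0 : g z0 = 1 := by
    have t1 : Tendsto (fun k => g (p k)) atTop (nhds (g z0)) :=
      (g.continuous.tendsto z0).comp hptend
    have t2 : Tendsto (fun k => g (p k)) atTop (nhds 1) := by
      simp_rw [hgp]; exact tendsto_const_nhds
    exact tendsto_nhds_unique t1 t2
  set q : ℕ → ↥K := fun k => ⟨1 / (2 ^ (k + 2) + 2), mem_K_left (k+1) (Nat.le_add_left 1 k)⟩ with hq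
  have hqtend : Tendsto q atTop (nhds z0) := by
    rw [tendsto_subtype_rng]
    exact tendsto_left
  have hhq : ∀ k, h (q k) = 1 := by
    intro k
    have g0 : g (q k) = 0 := by
      refine hg (q k) (mem_biUnion (Nat.le_add_left 1 k) ?_)
      exact ⟨le_refl _, one_div_le_one_div_of_le (by positivity) (by linarith)⟩
    have := hval (q k)
    rw [g0, zero_add] at this
    exact this
  have hh0 : h z0 = 1 := by
    have t1 : Tendsto (fun k => h (q k)) atTop (nhds (h z0)) :=
      (h.continuous.tendsto z0).comp hqtend
    have t2 : Tendsto (fun k => h (q k)) atTop (nhds 1) := by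
      simp_rw [hhq]; exact tendsto_const_nhds
    exact tendsto_nhds_unique t1 t2
  have := hval z0
  rw [hg0, hh0] at this
  norm_num at this

end Stmt19

open Stmt19 in
/-- With `xₙ = 1/2^(n+1)`, `Iₙ = [1/(2^(n+1)+2), 1/(2^(n+1)+1)]` and
`K = ⋃_{n≥1} Iₙ ∪ {xₙ : n ≥ 1} ∪ {0}`: the set `K` is compact, `xₙ ∉ Iₘ` for all
`n, m ≥ 1`, and in the Banach lattice `E = C(K)` the atomic part
`E_A = {f : f = 0 on ⋃_{n≥1} Iₙ}` together with the non-atomic part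
`E_{A^d} = {f : f(xₙ) = 0 for all n ≥ 1}` does not decompose `E`: the constant function
`1` is not a sum `g + h` with `g ∈ E_A` and `h ∈ E_{A^d}`; in particular `E_A` is not a
projection band. -/
theorem stmt19 :
    IsCompact K ∧
      (∀ n m : ℕ, 1 ≤ n → 1 ≤ m → xpt n ∉ Iint m) ∧
      ¬ ∃ g h : C(↥K, ℂ),
          (∀ t : ↥K, (t : ℝ) ∈ ⋃ n ∈ {n : ℕ | 1 ≤ n}, Iint n → g t = 0) ∧
          (∀ t : ↥K, (∃ n : ℕ, 1 ≤ n ∧ (t : ℝ) = xpt n) → h t = 0) ∧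
          (1 : C(↥K, ℂ)) = g + h := by
  exact ⟨K_compact, part2, part3⟩
end
end
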